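/- arXiv:2206.09254 — 5 statements merged into one kernel-verified Lean document; each statement's English description precedes it below -/
import Mathlib

section
/- Suppose each player i uses the entropy regularizer, so that the M-FTRL strategy is the softmax π_i^t(a_i) = exp(z_i^t(a_i)) / Σ_{a'∈A_i} exp(z_i^t(a')), where t ↦ z_i^t(a_i) is differentiable with d/dt z_i^t(a_i) = q_i^{π^t}(a_i) + (μ/π_i^t(a_i))(c_i(a_i) − π_i^t(a_i)). Then for every player i and action a_i, the trajectory satisfies the replicator–mutator dynamics: d/dt π_i^t(a_i) = π_i^t(a_i)(q_i^{π^t}(a_i) − v_i^{π^t}) + μ(c_i(a_i) − π_i^t(a_i)). -/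
/-!
The softmax `π = exp z / ∑ exp z` has `π̇(a) = π(a) (ż(a) - ∑ π ż)`. With the M-FTRL score rate
`ż = q + μ (c - π) / π`, the mutation term contributes `μ (c(a) - π(a))` to `π(a) ż(a)` and
`μ (∑ c - ∑ π) = 0` to the mean `∑ π ż`, because `c` and `π` are both probability vectors; what
is left of the mean is `∑ π q = v`, which gives the replicator–mutator dynamics.
-/

open Finset

noncomputable section

variable {A1 A2 : Type*}

/-- Expected utility of the strategy profile `(p1, p2)` under utility function `u`. -/
def eV [Fintype A1] [Fintype A2] (u : A1 → A2 → ℝ) (p1 : A1 → ℝ) (p2 : A2 → ℝ) : ℝ :=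
  ∑ a1, ∑ a2, p1 a1 * p2 a2 * u a1 a2

/-- Conditional expected utility of action `a1` for player 1. -/
def cV1 [Fintype A2] (u : A1 → A2 → ℝ) (p2 : A2 → ℝ) (a1 : A1) : ℝ :=
  ∑ a2, p2 a2 * u a1 a2

/-- Conditional expected utility of action `a2` for player 2. -/
def cV2 [Fintype A1] (u : A1 → A2 → ℝ) (p1 : A1 → ℝ) (a2 : A2) : ℝ :=
  ∑ a1, p1 a1 * u a1 a2

/-- Kullback–Leibler divergence (with the convention `0 ln 0 = 0`,
which holds since `Real.log 0 = 0` in Lean). -/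
def KLd {A : Type*} [Fintype A] (p q : A → ℝ) : ℝ :=
  ∑ a, p a * Real.log (p a / q a)

/-- Bregman divergence associated with a differentiable function `ψ`. -/
def breg {A : Type*} [Fintype A] (ψ : (A → ℝ) → ℝ) (x y : A → ℝ) : ℝ :=
  ψ x - ψ y - fderiv ℝ ψ y (x - y)

/-- Euclidean inner product on `A → ℝ`. -/
def ip {A : Type*} [Fintype A] (z p : A → ℝ) : ℝ := ∑ a, z a * p a

section Softmax

variable {A : Type*} [Fintype A]

lemma sum_exp_pos (z : A → ℝ) (a : A) : 0 < ∑ a', Real.exp (z a') :=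
  sum_pos (fun a' _ => Real.exp_pos (z a')) ⟨a, mem_univ a⟩

lemma softmax_pos {z p : A → ℝ} (hp : ∀ a, p a = Real.exp (z a) / ∑ a', Real.exp (z a'))
    (a : A) : 0 < p a := by
  rw [hp a]
  exact div_pos (Real.exp_pos _) (sum_exp_pos z a)

lemma sum_softmax [Nonempty A] {z p : A → ℝ}
    (hp : ∀ a, p a = Real.exp (z a) / ∑ a', Real.exp (z a')) : ∑ a, p a = 1 := by
  simp only [hp, ← sum_div]
  exact div_self (sum_exp_pos z (Classical.arbitrary A)).ne'

lemma hasDerivAt_softmax {z π : ℝ → A → ℝ} {d : A → ℝ} {t : ℝ}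
    (hπ : ∀ s a, π s a = Real.exp (z s a) / ∑ a', Real.exp (z s a'))
    (hz : ∀ a, HasDerivAt (fun s => z s a) (d a) t) (a : A) :
    HasDerivAt (fun s => π s a) (π t a * (d a - ∑ a', π t a' * d a')) t := by
  have hsum : HasDerivAt (fun s => ∑ a', Real.exp (z s a')) (∑ a', Real.exp (z t a') * d a') t :=
    HasDerivAt.fun_sum fun a' _ => (hz a').exp
  have hquot := (hz a).exp.fun_div hsum (sum_exp_pos (z t) a).ne'
  have hmean : ∑ a', π t a' * d a'
      = (∑ a', Real.exp (z t a') * d a') / ∑ a', Real.exp (z t a') := by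
    simp only [hπ t, sum_div, div_mul_eq_mul_div]
  rw [show (fun s => π s a) = fun s => Real.exp (z s a) / ∑ a', Real.exp (z s a') from
    funext fun s => hπ s a]
  refine hquot.congr_deriv ?_
  rw [hmean, hπ t a]
  have := (sum_exp_pos (z t) a).ne'
  field_simp

theorem hasDerivAt_softmax_of_mutated_score {z π : ℝ → A → ℝ} {q c : A → ℝ} {μ t : ℝ}
    (hc : ∑ a, c a = 1) (hπ : ∀ s a, π s a = Real.exp (z s a) / ∑ a', Real.exp (z s a'))
    (hz : ∀ a, HasDerivAt (fun s => z s a) (q a + μ / π t a * (c a - π t a)) t) (a : A) :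
    HasDerivAt (fun s => π s a)
      (π t a * (q a - ∑ a', π t a' * q a') + μ * (c a - π t a)) t := by
  have : Nonempty A := ⟨a⟩
  have hweighted : ∀ a', π t a' * (q a' + μ / π t a' * (c a' - π t a'))
      = π t a' * q a' + μ * (c a' - π t a') := fun a' => by
    field_simp [(softmax_pos (hπ t) a').ne']
  have hmean : ∑ a', π t a' * (q a' + μ / π t a' * (c a' - π t a')) = ∑ a', π t a' * q a' := by
    rw [sum_congr rfl fun a' _ => hweighted a', sum_add_distrib, ← mul_sum, sum_sub_distrib, hc,
      sum_softmax (hπ t), sub_self, mul_zero, add_zero]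
  convert hasDerivAt_softmax hπ hz a using 1
  rw [hmean, mul_sub (π t a) (q a + _), hweighted]
  ring

end Softmax

section ExpectedUtility

variable [Fintype A1] [Fintype A2]

lemma eV_eq_sum_mul_cV1 (u : A1 → A2 → ℝ) (p1 : A1 → ℝ) (p2 : A2 → ℝ) :
    eV u p1 p2 = ∑ a1, p1 a1 * cV1 u p2 a1 := by
  simp only [eV, cV1, mul_sum, mul_assoc]

lemma eV_eq_sum_mul_cV2 (u : A1 → A2 → ℝ) (p1 : A1 → ℝ) (p2 : A2 → ℝ) :
    eV u p1 p2 = ∑ a2, p2 a2 * cV2 u p1 a2 := by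
  rw [eV, sum_comm]
  simp only [cV2, mul_sum]
  exact sum_congr rfl fun _ _ => sum_congr rfl fun _ _ => by ring

end ExpectedUtility

theorem mftrl_entropy_is_rmd_general
    [Fintype A1] [Fintype A2]
    (u1 u2 : A1 → A2 → ℝ)
    (μ : ℝ)
    (c1 : A1 → ℝ) (c2 : A2 → ℝ)
    (hc1 : c1 ∈ stdSimplex ℝ A1)
    (hc2 : c2 ∈ stdSimplex ℝ A2)
    (z1 : ℝ → A1 → ℝ) (z2 : ℝ → A2 → ℝ)
    (π1 : ℝ → A1 → ℝ) (π2 : ℝ → A2 → ℝ)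
    (hπ1 : ∀ t a, π1 t a = Real.exp (z1 t a) / (∑ a', Real.exp (z1 t a')))
    (hπ2 : ∀ t a, π2 t a = Real.exp (z2 t a) / (∑ a', Real.exp (z2 t a')))
    (hz1 : ∀ t a, HasDerivAt (fun s => z1 s a)
      (cV1 u1 (π2 t) a + μ / π1 t a * (c1 a - π1 t a)) t)
    (hz2 : ∀ t a, HasDerivAt (fun s => z2 s a)
      (cV2 u2 (π1 t) a + μ / π2 t a * (c2 a - π2 t a)) t) :
    (∀ t a, HasDerivAt (fun s => π1 s a)
      (π1 t a * (cV1 u1 (π2 t) a - eV u1 (π1 t) (π2 t)) + μ * (c1 a - π1 t a)) t) ∧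
    (∀ t a, HasDerivAt (fun s => π2 s a)
      (π2 t a * (cV2 u2 (π1 t) a - eV u2 (π1 t) (π2 t)) + μ * (c2 a - π2 t a)) t) := by
  refine ⟨fun t a => ?_, fun t a => ?_⟩
  · rw [eV_eq_sum_mul_cV1]
    exact hasDerivAt_softmax_of_mutated_score hc1.2 hπ1 (hz1 t) a
  · rw [eV_eq_sum_mul_cV2]
    exact hasDerivAt_softmax_of_mutated_score hc2.2 hπ2 (hz2 t) a

/-- **Theorem 1.** If each player uses the entropy regularizer, so that the
M-FTRL strategy is the softmax of the score `z`, where `z` is differentiable with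
`d/dt z_i^t(a_i) = q_i^{π^t}(a_i) + (μ/π_i^t(a_i))(c_i(a_i) − π_i^t(a_i))`,
then the trajectory satisfies the replicator–mutator dynamics. -/
theorem mftrl_entropy_is_rmd
    [Fintype A1] [Fintype A2]
    (u1 u2 : A1 → A2 → ℝ) (hzs : ∀ a1 a2, u2 a1 a2 = -u1 a1 a2)
    (μ : ℝ) (hμ : 0 < μ)
    (c1 : A1 → ℝ) (c2 : A2 → ℝ)
    (hc1 : c1 ∈ stdSimplex ℝ A1) (hc1pos : ∀ a, 0 < c1 a)
    (hc2 : c2 ∈ stdSimplex ℝ A2) (hc2pos : ∀ a, 0 < c2 a)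
    (z1 : ℝ → A1 → ℝ) (z2 : ℝ → A2 → ℝ)
    (π1 : ℝ → A1 → ℝ) (π2 : ℝ → A2 → ℝ)
    (hπ1 : ∀ t a, π1 t a = Real.exp (z1 t a) / (∑ a', Real.exp (z1 t a')))
    (hπ2 : ∀ t a, π2 t a = Real.exp (z2 t a) / (∑ a', Real.exp (z2 t a')))
    (hz1 : ∀ t a, HasDerivAt (fun s => z1 s a)
      (cV1 u1 (π2 t) a + μ / π1 t a * (c1 a - π1 t a)) t)
    (hz2 : ∀ t a, HasDerivAt (fun s => z2 s a)
      (cV2 u2 (π1 t) a + μ / π2 t a * (c2 a - π2 t a)) t) :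
    (∀ t a, HasDerivAt (fun s => π1 s a)
      (π1 t a * (cV1 u1 (π2 t) a - eV u1 (π1 t) (π2 t)) + μ * (c1 a - π1 t a)) t) ∧
    (∀ t a, HasDerivAt (fun s => π2 s a)
      (π2 t a * (cV2 u2 (π1 t) a - eV u2 (π1 t) (π2 t)) + μ * (c2 a - π2 t a)) t) :=
  mftrl_entropy_is_rmd_general u1 u2 μ c1 c2 hc1 hc2 z1 z2 π1 π2 hπ1 hπ2 hz1 hz2
end
end

section
/- Let t ↦ (π^t, z^t) be a continuous-time M-FTRL trajectory with strictly convex, continuously differentiable regularizers ψ₁, ψ₂, such that each π_i^t has full support and t ↦ π_i^t is differentiable, and let π^μ be a stationary point of the replicator–mutator dynamics with the same μ and c. Then the map t ↦ D_ψ(π^μ, π^t) is differentiable and d/dt D_ψ(π^μ, π^t) = −μ Σ_{i=1}^{2} Σ_{a_i∈A_i} c_i(a_i) (√(π_i^t(a_i)/π_i^μ(a_i)) − √(π_i^μ(a_i)/π_i^t(a_i)))². -/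
open Finset

noncomputable section

variable {A1 A2 : Type*}

/-!
At an interior FTRL point the first-order condition identifies `Dψ(π)` with `z` on the tangent
space of the simplex, so `D_ψ(π^μ, π^t) = ψ(π^μ) - ψ(π^t) - ⟨z^t, π^μ - π^t⟩` and its time
derivative is `⟨ż^t, π^t - π^μ⟩`. Splitting `ż^t` into payoffs and mutation, the zero-sum
property reduces the payoff part to the payoffs of the mixed profiles `(π₁^t, π₂^μ)` and
`(π₁^μ, π₂^t)`, which the stationarity equations of `π^μ` evaluate; what remains is
`-μ Σ c (x/y + y/x - 2)`, the sum of squares in the statement.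
-/

open Filter Topology

section OnePlayer

variable {A : Type*} [Fintype A]

theorem eventually_add_smul_mem_stdSimplex {x v : A → ℝ} (hx : x ∈ stdSimplex ℝ A)
    (hxpos : ∀ a, 0 < x a) (hv : ∑ a, v a = 0) :
    ∀ᶠ s in 𝓝 (0 : ℝ), x + s • v ∈ stdSimplex ℝ A := by
  have hpos : ∀ᶠ s in 𝓝 (0 : ℝ), ∀ a, 0 < x a + s * v a :=
    Filter.eventually_all.2 fun a =>
      (continuousAt_const.eventually_lt (by fun_prop) (by simpa using hxpos a))
  filter_upwards [hpos] with s hs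
  refine ⟨fun a => (hs a).le, ?_⟩
  simp [sum_add_distrib, ← mul_sum, hv, hx.2]

theorem sum_eq_zero_of_hasDerivAt_of_mem_stdSimplex {π : ℝ → A → ℝ} {π' : A → ℝ} {t : ℝ}
    (hmem : ∀ s, π s ∈ stdSimplex ℝ A) (hπ : HasDerivAt π π' t) : ∑ a, π' a = 0 := by
  have hsum : HasDerivAt (fun s => ∑ a, π s a) (∑ a, π' a) t :=
    HasDerivAt.fun_sum fun a _ => hasDerivAt_pi.1 hπ a
  simp only [(hmem _).2] at hsum
  exact hsum.unique (hasDerivAt_const t 1)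

theorem fderiv_apply_eq_ip_of_isMaxOn_stdSimplex {ψ : (A → ℝ) → ℝ} {z x v : A → ℝ}
    (hψ : DifferentiableAt ℝ ψ x) (hx : x ∈ stdSimplex ℝ A) (hxpos : ∀ a, 0 < x a)
    (hmax : IsMaxOn (fun p => ip z p - ψ p) (stdSimplex ℝ A) x) (hv : ∑ a, v a = 0) :
    fderiv ℝ ψ x v = ip z v := by
  have hloc : IsLocalMax (fun s : ℝ => ip z (x + s • v) - ψ (x + s • v)) 0 :=
    (eventually_add_smul_mem_stdSimplex hx hxpos hv).mono fun s hs => by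
      simpa using hmax hs
  have hline : HasDerivAt (fun s : ℝ => x + s • v) v 0 := by
    simpa using ((hasDerivAt_id (0 : ℝ)).smul_const v).const_add x
  have hψline : HasDerivAt (fun s : ℝ => ψ (x + s • v)) (fderiv ℝ ψ x v) 0 :=
    hψ.hasFDerivAt.comp_hasDerivAt_of_eq 0 hline (by simp)
  have hip : (fun s : ℝ => ip z (x + s • v)) = fun s => ip z x + s * ip z v := by
    funext s
    simp only [ip, Pi.add_apply, Pi.smul_apply, smul_eq_mul, mul_add, sum_add_distrib, mul_sum]
    congr 1
    exact sum_congr rfl fun a _ => by ring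
  have hipline : HasDerivAt (fun s : ℝ => ip z (x + s • v)) (ip z v) 0 := by
    rw [hip]
    simpa using ((hasDerivAt_id (0 : ℝ)).mul_const (ip z v)).const_add (ip z x)
  exact (sub_eq_zero.1 (hloc.hasDerivAt_eq_zero (hipline.sub hψline))).symm

theorem breg_eq_of_isMaxOn_stdSimplex {ψ : (A → ℝ) → ℝ} {z x y : A → ℝ}
    (hψ : DifferentiableAt ℝ ψ x) (hy : y ∈ stdSimplex ℝ A) (hx : x ∈ stdSimplex ℝ A)
    (hxpos : ∀ a, 0 < x a) (hmax : IsMaxOn (fun p => ip z p - ψ p) (stdSimplex ℝ A) x) :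
    breg ψ y x = ψ y - ψ x - ip z (y - x) := by
  rw [breg, fderiv_apply_eq_ip_of_isMaxOn_stdSimplex hψ hx hxpos hmax]
  simp [sum_sub_distrib, hy.2, hx.2]

theorem hasDerivAt_breg_of_isMaxOn_stdSimplex {ψ : (A → ℝ) → ℝ} {z π : ℝ → A → ℝ}
    {y w : A → ℝ} {t : ℝ} (hψ : Differentiable ℝ ψ) (hy : y ∈ stdSimplex ℝ A)
    (hmem : ∀ s, π s ∈ stdSimplex ℝ A) (hpos : ∀ s a, 0 < π s a)
    (hmax : ∀ s, IsMaxOn (fun p => ip (z s) p - ψ p) (stdSimplex ℝ A) (π s))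
    (hπ : ∀ a, DifferentiableAt ℝ (fun s => π s a) t)
    (hz : ∀ a, HasDerivAt (fun s => z s a) (w a) t) :
    HasDerivAt (fun s => breg ψ y (π s)) (∑ a, w a * (π t a - y a)) t := by
  set π' : A → ℝ := fun a => deriv (fun s => π s a) t
  have hπ' : HasDerivAt π π' t := hasDerivAt_pi.2 fun a => (hπ a).hasDerivAt
  have hbreg : (fun s => breg ψ y (π s)) = fun s => ψ y - ψ (π s) - ip (z s) (y - π s) :=
    funext fun s => breg_eq_of_isMaxOn_stdSimplex (hψ _) hy (hmem s) (hpos s) (hmax s)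
  have hψπ : HasDerivAt (fun s => ψ (π s)) (ip (z t) π') t := by
    rw [← fderiv_apply_eq_ip_of_isMaxOn_stdSimplex (hψ _) (hmem t) (hpos t) (hmax t)
      (sum_eq_zero_of_hasDerivAt_of_mem_stdSimplex hmem hπ')]
    exact (hψ _).hasFDerivAt.comp_hasDerivAt t hπ'
  have hip : HasDerivAt (fun s => ip (z s) (y - π s))
      (∑ a, (w a * (y a - π t a) + z t a * -π' a)) t :=
    HasDerivAt.fun_sum fun a _ => (hz a).mul ((hasDerivAt_pi.1 hπ' a).const_sub (y a))
  rw [hbreg]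
  refine ((hψπ.const_sub (ψ y)).sub hip).congr_deriv ?_
  simp only [ip, ← sum_neg_distrib, ← sum_sub_distrib]
  exact sum_congr rfl fun a _ => by ring

theorem pos_of_replicatorMutator_stationary {y k μ c : ℝ} (hμ : 0 < μ) (hc : 0 < c)
    (hy : 0 ≤ y) (hst : y * k + μ * (c - y) = 0) : 0 < y :=
  hy.lt_of_ne (by rintro rfl; exact (mul_pos hμ hc).ne' (by linear_combination hst))

theorem sum_mul_eq_of_replicatorMutator_stationary {q y c p : A → ℝ} {v μ : ℝ}
    (hy : ∀ a, 0 < y a) (hst : ∀ a, y a * (q a - v) + μ * (c a - y a) = 0)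
    (hp : ∑ a, p a = 1) :
    ∑ a, q a * p a = v + μ - μ * ∑ a, c a * (p a / y a) := by
  have hterm : ∀ a ∈ univ, q a * p a = v * p a + μ * p a - μ * (c a * (p a / y a)) :=
    fun a _ => by
      have := (hy a).ne'
      field_simp
      linear_combination p a * hst a
  rw [sum_congr rfl hterm, sum_sub_distrib, sum_add_distrib, ← mul_sum, ← mul_sum, ← mul_sum,
    hp]
  ring

theorem sum_mutation_mul_sub {x y c : A → ℝ} (μ : ℝ) (hx : ∀ a, 0 < x a)
    (hxs : ∑ a, x a = 1) (hys : ∑ a, y a = 1) (hcs : ∑ a, c a = 1) :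
    ∑ a, μ / x a * (c a - x a) * (x a - y a) = μ - μ * ∑ a, c a * (y a / x a) := by
  have hterm : ∀ a ∈ univ, μ / x a * (c a - x a) * (x a - y a) =
      μ * c a - μ * x a + μ * y a - μ * (c a * (y a / x a)) := fun a _ => by
    have := (hx a).ne'
    field_simp
    ring
  rw [sum_congr rfl hterm, sum_sub_distrib, sum_add_distrib, sum_sub_distrib, ← mul_sum,
    ← mul_sum, ← mul_sum, ← mul_sum, hxs, hys, hcs]
  ring

theorem sqrt_div_sub_sqrt_div_sq {x y : ℝ} (hx : 0 < x) (hy : 0 < y) :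
    (Real.sqrt (x / y) - Real.sqrt (y / x)) ^ 2 = x / y + y / x - 2 := by
  have hprod : Real.sqrt (x / y) * Real.sqrt (y / x) = 1 := by
    rw [← Real.sqrt_mul (by positivity), div_mul_div_cancel₀' hx.ne', div_self hy.ne',
      Real.sqrt_one]
  linear_combination Real.sq_sqrt (div_pos hx hy).le + Real.sq_sqrt (div_pos hy hx).le -
    2 * hprod

theorem sum_mul_sqrt_div_sub_sqrt_div_sq {x y c : A → ℝ}
    (hx : ∀ a, 0 < x a) (hy : ∀ a, 0 < y a) (hcs : ∑ a, c a = 1) :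
    ∑ a, c a * (Real.sqrt (x a / y a) - Real.sqrt (y a / x a)) ^ 2 =
      ∑ a, c a * (x a / y a) + ∑ a, c a * (y a / x a) - 2 := by
  simp only [sqrt_div_sub_sqrt_div_sq (hx _) (hy _), mul_sub, mul_add, sum_sub_distrib,
    sum_add_distrib, ← sum_mul, hcs]
  ring

end OnePlayer

theorem eV_eq_sum_cV1_mul [Fintype A1] [Fintype A2] (u : A1 → A2 → ℝ) (p : A1 → ℝ)
    (q : A2 → ℝ) : eV u p q = ∑ a, cV1 u q a * p a := by
  simp only [eV, cV1, sum_mul]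
  exact sum_congr rfl fun a _ => sum_congr rfl fun b _ => by ring

theorem eV_eq_sum_cV2_mul [Fintype A1] [Fintype A2] (u : A1 → A2 → ℝ) (p : A1 → ℝ)
    (q : A2 → ℝ) : eV u p q = ∑ b, cV2 u p b * q b := by
  simp only [eV, cV2, sum_mul]
  rw [sum_comm]
  exact sum_congr rfl fun b _ => sum_congr rfl fun a _ => by ring

theorem eV_neg [Fintype A1] [Fintype A2] (u : A1 → A2 → ℝ) (p : A1 → ℝ) (q : A2 → ℝ) :
    eV (-u) p q = -eV u p q := by
  simp [eV]

theorem sum_cV1_mul_sub_add_sum_cV2_neg_mul_sub [Fintype A1] [Fintype A2]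
    (u : A1 → A2 → ℝ) (x1 y1 : A1 → ℝ) (x2 y2 : A2 → ℝ) :
    ∑ a, cV1 u x2 a * (x1 a - y1 a) + ∑ b, cV2 (-u) x1 b * (x2 b - y2 b) =
      eV u x1 y2 + eV (-u) y1 x2 := by
  simp only [mul_sub, sum_sub_distrib, ← eV_eq_sum_cV1_mul, ← eV_eq_sum_cV2_mul, eV_neg]
  ring

theorem mftrl_bregman_derivative_stationary_general
    [Fintype A1] [Fintype A2]
    (u1 u2 : A1 → A2 → ℝ) (hzs : ∀ a1 a2, u2 a1 a2 = -u1 a1 a2)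
    (μ : ℝ) (hμ : 0 < μ)
    (c1 : A1 → ℝ) (c2 : A2 → ℝ)
    (hc1 : c1 ∈ stdSimplex ℝ A1) (hc1pos : ∀ a, 0 < c1 a)
    (hc2 : c2 ∈ stdSimplex ℝ A2) (hc2pos : ∀ a, 0 < c2 a)
    (ψ1 : (A1 → ℝ) → ℝ) (ψ2 : (A2 → ℝ) → ℝ)
    (hψ1d : ContDiff ℝ 1 ψ1)
    (hψ2d : ContDiff ℝ 1 ψ2)
    (z1 : ℝ → A1 → ℝ) (z2 : ℝ → A2 → ℝ)
    (π1 : ℝ → A1 → ℝ) (π2 : ℝ → A2 → ℝ)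
    (hmem1 : ∀ t, π1 t ∈ stdSimplex ℝ A1)
    (hmax1 : ∀ t, ∀ p ∈ stdSimplex ℝ A1,
      ip (z1 t) p - ψ1 p ≤ ip (z1 t) (π1 t) - ψ1 (π1 t))
    (hpos1 : ∀ t a, 0 < π1 t a)
    (hdiff1 : ∀ a, Differentiable ℝ fun t => π1 t a)
    (hmem2 : ∀ t, π2 t ∈ stdSimplex ℝ A2)
    (hmax2 : ∀ t, ∀ p ∈ stdSimplex ℝ A2,
      ip (z2 t) p - ψ2 p ≤ ip (z2 t) (π2 t) - ψ2 (π2 t))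
    (hpos2 : ∀ t a, 0 < π2 t a)
    (hdiff2 : ∀ a, Differentiable ℝ fun t => π2 t a)
    (hz1 : ∀ t a, HasDerivAt (fun s => z1 s a)
      (cV1 u1 (π2 t) a + μ / π1 t a * (c1 a - π1 t a)) t)
    (hz2 : ∀ t a, HasDerivAt (fun s => z2 s a)
      (cV2 u2 (π1 t) a + μ / π2 t a * (c2 a - π2 t a)) t)
    (π1μ : A1 → ℝ) (π2μ : A2 → ℝ)
    (hπ1μ : π1μ ∈ stdSimplex ℝ A1) (hπ2μ : π2μ ∈ stdSimplex ℝ A2)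
    (hst1 : ∀ a, π1μ a * (cV1 u1 π2μ a - eV u1 π1μ π2μ) + μ * (c1 a - π1μ a) = 0)
    (hst2 : ∀ a, π2μ a * (cV2 u2 π1μ a - eV u2 π1μ π2μ) + μ * (c2 a - π2μ a) = 0) :
    ∀ t, HasDerivAt (fun s => breg ψ1 π1μ (π1 s) + breg ψ2 π2μ (π2 s))
      (-μ * ((∑ a, c1 a * (Real.sqrt (π1 t a / π1μ a) - Real.sqrt (π1μ a / π1 t a)) ^ 2) +
             (∑ a, c2 a * (Real.sqrt (π2 t a / π2μ a) - Real.sqrt (π2μ a / π2 t a)) ^ 2))) t := by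
  intro t
  obtain rfl : u2 = -u1 := funext₂ hzs
  have hy1 : ∀ a, 0 < π1μ a := fun a =>
    pos_of_replicatorMutator_stationary hμ (hc1pos a) (hπ1μ.1 a) (hst1 a)
  have hy2 : ∀ a, 0 < π2μ a := fun a =>
    pos_of_replicatorMutator_stationary hμ (hc2pos a) (hπ2μ.1 a) (hst2 a)
  refine ((hasDerivAt_breg_of_isMaxOn_stdSimplex (hψ1d.differentiable one_ne_zero) hπ1μ hmem1
    hpos1 (fun s => isMaxOn_iff.2 (hmax1 s)) (fun a => hdiff1 a t) (hz1 t)).add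
    (hasDerivAt_breg_of_isMaxOn_stdSimplex (hψ2d.differentiable one_ne_zero) hπ2μ hmem2
    hpos2 (fun s => isMaxOn_iff.2 (hmax2 s)) (fun a => hdiff2 a t) (hz2 t))).congr_deriv ?_
  have hgame := sum_cV1_mul_sub_add_sum_cV2_neg_mul_sub u1 (π1 t) π1μ (π2 t) π2μ
  rw [eV_eq_sum_cV1_mul, eV_eq_sum_cV2_mul,
    sum_mul_eq_of_replicatorMutator_stationary hy1 hst1 (hmem1 t).2,
    sum_mul_eq_of_replicatorMutator_stationary hy2 hst2 (hmem2 t).2, eV_neg] at hgame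
  simp only [add_mul, sum_add_distrib]
  rw [sum_mutation_mul_sub μ (hpos1 t) (hmem1 t).2 hπ1μ.2 hc1.2,
    sum_mutation_mul_sub μ (hpos2 t) (hmem2 t).2 hπ2μ.2 hc2.2,
    sum_mul_sqrt_div_sub_sqrt_div_sq (hpos1 t) hy1 hc1.2,
    sum_mul_sqrt_div_sub_sqrt_div_sq (hpos2 t) hy2 hc2.2]
  linear_combination hgame

/-- **Theorem 2, first part.** Along a continuous-time M-FTRL trajectory with
strictly convex, continuously differentiable regularizers (and full-support, differentiable
strategies), the Bregman divergence from a stationary point `π^μ` of the replicator–mutator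
dynamics is differentiable in time with
`d/dt D_ψ(π^μ, π^t) = −μ Σ_i Σ_{a_i} c_i(a_i) (√(π_i^t(a_i)/π_i^μ(a_i)) − √(π_i^μ(a_i)/π_i^t(a_i)))²`. -/
theorem mftrl_bregman_derivative_stationary
    [Fintype A1] [Fintype A2]
    (u1 u2 : A1 → A2 → ℝ) (hzs : ∀ a1 a2, u2 a1 a2 = -u1 a1 a2)
    (μ : ℝ) (hμ : 0 < μ)
    (c1 : A1 → ℝ) (c2 : A2 → ℝ)
    (hc1 : c1 ∈ stdSimplex ℝ A1) (hc1pos : ∀ a, 0 < c1 a)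
    (hc2 : c2 ∈ stdSimplex ℝ A2) (hc2pos : ∀ a, 0 < c2 a)
    (ψ1 : (A1 → ℝ) → ℝ) (ψ2 : (A2 → ℝ) → ℝ)
    (hψ1 : StrictConvexOn ℝ (stdSimplex ℝ A1) ψ1) (hψ1d : ContDiff ℝ 1 ψ1)
    (hψ2 : StrictConvexOn ℝ (stdSimplex ℝ A2) ψ2) (hψ2d : ContDiff ℝ 1 ψ2)
    (z1 : ℝ → A1 → ℝ) (z2 : ℝ → A2 → ℝ)
    (π1 : ℝ → A1 → ℝ) (π2 : ℝ → A2 → ℝ)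
    (hmem1 : ∀ t, π1 t ∈ stdSimplex ℝ A1)
    (hmax1 : ∀ t, ∀ p ∈ stdSimplex ℝ A1,
      ip (z1 t) p - ψ1 p ≤ ip (z1 t) (π1 t) - ψ1 (π1 t))
    (hpos1 : ∀ t a, 0 < π1 t a)
    (hdiff1 : ∀ a, Differentiable ℝ fun t => π1 t a)
    (hmem2 : ∀ t, π2 t ∈ stdSimplex ℝ A2)
    (hmax2 : ∀ t, ∀ p ∈ stdSimplex ℝ A2,
      ip (z2 t) p - ψ2 p ≤ ip (z2 t) (π2 t) - ψ2 (π2 t))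
    (hpos2 : ∀ t a, 0 < π2 t a)
    (hdiff2 : ∀ a, Differentiable ℝ fun t => π2 t a)
    (hz1 : ∀ t a, HasDerivAt (fun s => z1 s a)
      (cV1 u1 (π2 t) a + μ / π1 t a * (c1 a - π1 t a)) t)
    (hz2 : ∀ t a, HasDerivAt (fun s => z2 s a)
      (cV2 u2 (π1 t) a + μ / π2 t a * (c2 a - π2 t a)) t)
    (π1μ : A1 → ℝ) (π2μ : A2 → ℝ)
    (hπ1μ : π1μ ∈ stdSimplex ℝ A1) (hπ2μ : π2μ ∈ stdSimplex ℝ A2)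
    (hst1 : ∀ a, π1μ a * (cV1 u1 π2μ a - eV u1 π1μ π2μ) + μ * (c1 a - π1μ a) = 0)
    (hst2 : ∀ a, π2μ a * (cV2 u2 π1μ a - eV u2 π1μ π2μ) + μ * (c2 a - π2μ a) = 0) :
    ∀ t, HasDerivAt (fun s => breg ψ1 π1μ (π1 s) + breg ψ2 π2μ (π2 s))
      (-μ * ((∑ a, c1 a * (Real.sqrt (π1 t a / π1μ a) - Real.sqrt (π1μ a / π1 t a)) ^ 2) +
             (∑ a, c2 a * (Real.sqrt (π2 t a / π2μ a) - Real.sqrt (π2μ a / π2 t a)) ^ 2))) t :=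
  mftrl_bregman_derivative_stationary_general u1 u2 hzs μ hμ c1 c2 hc1 hc1pos hc2 hc2pos ψ1 ψ2 hψ1d
    hψ2d z1 z2 π1 π2 hmem1 hmax1 hpos1 hdiff1 hmem2 hmax2 hpos2 hdiff2 hz1 hz2 π1μ π2μ hπ1μ hπ2μ
    hst1 hst2
end
end

section
/- Let t ↦ π^t (t ≥ 0) be a differentiable trajectory in Δ°(A₁) × Δ°(A₂) following the replicator–mutator dynamics with mutation parameter μ > 0 and reference strategies c_i ∈ Δ°(A_i), let π^μ be a stationary point of these dynamics, and set ξ = min_{i∈{1,2}, a_i∈A_i} c_i(a_i)/π_i^μ(a_i). Then the trajectory converges to the stationary point exponentially fast: for all t ≥ 0, KL(π^μ, π^t) ≤ KL(π^μ, π^0) · exp(−μ ξ t). -/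
open Finset

noncomputable section

variable {A1 A2 : Type*}

/-!
`V(t) = KL(π^μ, π^t)` is a Lyapunov function. Along the dynamics,
`-V' = Σ_i Σ_a π^μ_i(a) π̇_i(a) / π_i(a)`. Because the game is zero-sum and `π^μ` is stationary,
the payoff terms cancel and what remains is `μ Σ_i Σ_a c_i(a) (π_i(a) - π^μ_i(a))² / (π^μ_i(a) π_i(a))`.
As `c_i / π^μ_i ≥ ξ` and the relative entropy is bounded by the chi-square divergence, this is
at least `μ ξ V`, and Grönwall's inequality gives the exponential decay.
-/

/-- `q` is the vector of conditional utilities of the actions and `v` the expected utility. -/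
def rmdField {A : Type*} (p q : A → ℝ) (v μ : ℝ) (c : A → ℝ) (a : A) : ℝ :=
  p a * (q a - v) + μ * (c a - p a)

lemma ne_zero_of_rmdField_eq_zero {A : Type*} {p q c : A → ℝ} {v μ : ℝ} {a : A} (hμ : μ ≠ 0)
    (hc : c a ≠ 0) (h : rmdField p q v μ c a = 0) : p a ≠ 0 := by
  intro hp
  simp [rmdField, hp, hμ, hc] at h

section OnePlayer

variable {A : Type*} [Fintype A]

lemma sum_mul_rmdField_div {r p q c : A → ℝ} {v μ : ℝ} (hr : ∑ a, r a = 1)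
    (hp : ∀ a, p a ≠ 0) :
    ∑ a, r a * (rmdField p q v μ c a / p a)
      = ∑ a, r a * q a - v + μ * (∑ a, r a * c a / p a - 1) := by
  have hterm : ∀ a, r a * (rmdField p q v μ c a / p a)
      = r a * q a - v * r a + (μ * (r a * c a / p a) - μ * r a) := fun a => by
    unfold rmdField
    field_simp [hp a]
  simp only [hterm, sum_add_distrib, sum_sub_distrib, ← mul_sum, hr]
  ring

lemma sum_mul_eq_of_rmdField_eq_zero {r p q c : A → ℝ} {v μ : ℝ}
    (hst : ∀ a, rmdField r q v μ c a = 0) (hr : ∀ a, r a ≠ 0) (hp : ∑ a, p a = 1) :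
    ∑ a, p a * q a = v - μ * (∑ a, p a * c a / r a - 1) := by
  have hq : ∀ a, p a * q a = v * p a - μ * (p a * c a / r a) + μ * p a := fun a => by
    have h := hst a
    unfold rmdField at h
    field_simp [hr a]
    linear_combination p a * h
  simp only [hq, sum_add_distrib, sum_sub_distrib, ← mul_sum, hp]
  ring

lemma sum_div_add_sum_div_sub_two {r p c : A → ℝ} (hc : ∑ a, c a = 1) (hr : ∀ a, r a ≠ 0)
    (hp : ∀ a, p a ≠ 0) :
    (∑ a, p a * c a / r a - 1) + (∑ a, r a * c a / p a - 1)
      = ∑ a, c a * (p a - r a) ^ 2 / (r a * p a) := by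
  have hterm : ∀ a, c a * (p a - r a) ^ 2 / (r a * p a)
      = p a * c a / r a + r a * c a / p a - 2 * c a := fun a => by
    field_simp [hr a, hp a]
    ring
  simp only [hterm, sum_sub_distrib, sum_add_distrib, ← mul_sum, hc]
  ring

lemma KLd_le_sum_sq_div {r p : A → ℝ} (hr : ∀ a, 0 ≤ r a) (hp : ∀ a, 0 < p a)
    (hsum : ∑ a, r a = ∑ a, p a) :
    KLd r p ≤ ∑ a, (p a - r a) ^ 2 / p a := by
  have hterm : ∀ a, r a * Real.log (r a / p a) ≤ (p a - r a) ^ 2 / p a + (r a - p a) := by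
    intro a
    rcases (hr a).eq_or_lt with h | h
    · simp [← h, sq, (hp a).ne']
    calc r a * Real.log (r a / p a) ≤ r a * (r a / p a - 1) :=
          mul_le_mul_of_nonneg_left (Real.log_le_sub_one_of_pos (div_pos h (hp a))) h.le
      _ = (p a - r a) ^ 2 / p a + (r a - p a) := by field_simp [(hp a).ne']; ring
  calc KLd r p ≤ ∑ a, ((p a - r a) ^ 2 / p a + (r a - p a)) := sum_le_sum fun a _ => hterm a
    _ = ∑ a, (p a - r a) ^ 2 / p a := by
      rw [sum_add_distrib, sum_sub_distrib, hsum, sub_self, add_zero]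

lemma mul_KLd_le_sum_sq_div {r p c : A → ℝ} {ξ : ℝ} (hξ0 : 0 ≤ ξ) (hξ : ∀ a, ξ ≤ c a / r a)
    (hr : ∀ a, 0 ≤ r a) (hp : ∀ a, 0 < p a) (hsum : ∑ a, r a = ∑ a, p a) :
    ξ * KLd r p ≤ ∑ a, c a * (p a - r a) ^ 2 / (r a * p a) :=
  calc ξ * KLd r p ≤ ξ * ∑ a, (p a - r a) ^ 2 / p a :=
        mul_le_mul_of_nonneg_left (KLd_le_sum_sq_div hr hp hsum) hξ0
    _ = ∑ a, ξ * ((p a - r a) ^ 2 / p a) := mul_sum _ _ _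
    _ ≤ ∑ a, c a / r a * ((p a - r a) ^ 2 / p a) := sum_le_sum fun a _ =>
        mul_le_mul_of_nonneg_right (hξ a) (div_nonneg (sq_nonneg _) (hp a).le)
    _ = ∑ a, c a * (p a - r a) ^ 2 / (r a * p a) :=
        sum_congr rfl fun _ _ => div_mul_div_comm _ _ _ _

lemma hasDerivAt_KLd {r p' : A → ℝ} {p : ℝ → A → ℝ} {t : ℝ}
    (hp : ∀ a, HasDerivAt (fun s => p s a) (p' a) t) (hpt : ∀ a, p t a ≠ 0) :
    HasDerivAt (fun s => KLd r (p s)) (-∑ a, r a * (p' a / p t a)) t := by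
  unfold KLd
  rw [← sum_neg_distrib]
  refine HasDerivAt.fun_sum fun a _ => ?_
  by_cases hr : r a = 0
  · simpa [hr] using hasDerivAt_const t (0 : ℝ)
  refine ((((hasDerivAt_const t (r a)).fun_div (hp a) (hpt a)).log
    (div_ne_zero hr (hpt a))).const_mul (r a)).congr_deriv ?_
  field_simp [hpt a]
  ring

end OnePlayer

lemma le_mul_exp_of_hasDerivAt_le {f f' : ℝ → ℝ} {K : ℝ}
    (hf : ∀ t, 0 ≤ t → HasDerivAt f (f' t) t) (hle : ∀ t, 0 ≤ t → f' t ≤ K * f t) :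
    ∀ t, 0 ≤ t → f t ≤ f 0 * Real.exp (K * t) := by
  intro t ht
  have h := le_gronwallBound_of_liminf_deriv_right_le (ε := 0) (b := t)
    (fun x hx => (hf x hx.1).continuousAt.continuousWithinAt)
    (fun x hx _ hr => ((hf x hx.1).hasDerivWithinAt.liminf_right_slope_le hr).mono
      fun z hz => by rwa [slope_def_module, smul_eq_mul] at hz)
    le_rfl (fun x hx => by simpa using hle x hx.1) t ⟨ht, le_rfl⟩
  simpa [gronwallBound_ε0] using h

section ZeroSum

variable [Fintype A1] [Fintype A2]

lemma sum_mul_cV1 (u : A1 → A2 → ℝ) (p1 : A1 → ℝ) (p2 : A2 → ℝ) :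
    ∑ a, p1 a * cV1 u p2 a = eV u p1 p2 := by
  simp only [eV, cV1, mul_sum, mul_assoc]

lemma sum_mul_cV2 (u : A1 → A2 → ℝ) (p1 : A1 → ℝ) (p2 : A2 → ℝ) :
    ∑ a, p2 a * cV2 u p1 a = eV u p1 p2 := by
  simp only [eV, cV2, mul_sum]
  rw [sum_comm]
  exact sum_congr rfl fun _ _ => sum_congr rfl fun _ _ => by ring

lemma eV_eq_neg {u1 u2 : A1 → A2 → ℝ} (hzs : ∀ a1 a2, u2 a1 a2 = -u1 a1 a2)
    (p1 : A1 → ℝ) (p2 : A2 → ℝ) : eV u2 p1 p2 = -eV u1 p1 p2 := by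
  simp only [eV, hzs, mul_neg, sum_neg_distrib]

/-- Differentiating `KL(r, p)` along the dynamics gives minus the left-hand side. The game terms
cancel because the game is zero-sum and `r` is stationary. -/
theorem rmd_dissipation_eq {u1 u2 : A1 → A2 → ℝ} (hzs : ∀ a1 a2, u2 a1 a2 = -u1 a1 a2) {μ : ℝ}
    {c1 p1 r1 : A1 → ℝ} {c2 p2 r2 : A2 → ℝ}
    (hc1 : ∑ a, c1 a = 1) (hc2 : ∑ a, c2 a = 1) (hp1 : ∑ a, p1 a = 1) (hp2 : ∑ a, p2 a = 1)
    (hr1 : ∑ a, r1 a = 1) (hr2 : ∑ a, r2 a = 1) (hp1ne : ∀ a, p1 a ≠ 0) (hp2ne : ∀ a, p2 a ≠ 0)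
    (hr1ne : ∀ a, r1 a ≠ 0) (hr2ne : ∀ a, r2 a ≠ 0)
    (hst1 : ∀ a, rmdField r1 (cV1 u1 r2) (eV u1 r1 r2) μ c1 a = 0)
    (hst2 : ∀ a, rmdField r2 (cV2 u2 r1) (eV u2 r1 r2) μ c2 a = 0) :
    ∑ a, r1 a * (rmdField p1 (cV1 u1 p2) (eV u1 p1 p2) μ c1 a / p1 a)
      + ∑ a, r2 a * (rmdField p2 (cV2 u2 p1) (eV u2 p1 p2) μ c2 a / p2 a)
      = μ * (∑ a, c1 a * (p1 a - r1 a) ^ 2 / (r1 a * p1 a)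
          + ∑ a, c2 a * (p2 a - r2 a) ^ 2 / (r2 a * p2 a)) := by
  have h1 := sum_mul_eq_of_rmdField_eq_zero hst1 hr1ne hp1
  have h2 := sum_mul_eq_of_rmdField_eq_zero hst2 hr2ne hp2
  rw [sum_mul_cV1] at h1
  rw [sum_mul_cV2] at h2
  rw [sum_mul_rmdField_div hr1 hp1ne, sum_mul_rmdField_div hr2 hp2ne, sum_mul_cV1, sum_mul_cV2,
    ← sum_div_add_sum_div_sub_two hc1 hr1ne hp1ne, ← sum_div_add_sum_div_sub_two hc2 hr2ne hp2ne]
  simp only [eV_eq_neg hzs] at h2 ⊢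
  linear_combination -h1 - h2

end ZeroSum

/-- **Corollary 1.** Along a differentiable full-support trajectory (for `t ≥ 0`)
of the replicator–mutator dynamics, with `π^μ` a stationary point and
`ξ = min_{i,a_i} c_i(a_i)/π_i^μ(a_i)`, the trajectory converges to the stationary point
exponentially fast: `KL(π^μ, π^t) ≤ KL(π^μ, π^0) exp(−μ ξ t)` for all `t ≥ 0`. -/
theorem rmd_kl_exponential_convergence
    [Fintype A1] [Fintype A2] [Nonempty A1] [Nonempty A2]
    (u1 u2 : A1 → A2 → ℝ) (hzs : ∀ a1 a2, u2 a1 a2 = -u1 a1 a2)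
    (μ : ℝ) (hμ : 0 < μ)
    (c1 : A1 → ℝ) (c2 : A2 → ℝ)
    (hc1 : c1 ∈ stdSimplex ℝ A1) (hc1pos : ∀ a, 0 < c1 a)
    (hc2 : c2 ∈ stdSimplex ℝ A2) (hc2pos : ∀ a, 0 < c2 a)
    (π1 : ℝ → A1 → ℝ) (π2 : ℝ → A2 → ℝ)
    (hmem1 : ∀ t, 0 ≤ t → π1 t ∈ stdSimplex ℝ A1) (hpos1 : ∀ t, 0 ≤ t → ∀ a, 0 < π1 t a)
    (hmem2 : ∀ t, 0 ≤ t → π2 t ∈ stdSimplex ℝ A2) (hpos2 : ∀ t, 0 ≤ t → ∀ a, 0 < π2 t a)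
    (hrmd1 : ∀ t, 0 ≤ t → ∀ a, HasDerivAt (fun s => π1 s a)
      (π1 t a * (cV1 u1 (π2 t) a - eV u1 (π1 t) (π2 t)) + μ * (c1 a - π1 t a)) t)
    (hrmd2 : ∀ t, 0 ≤ t → ∀ a, HasDerivAt (fun s => π2 s a)
      (π2 t a * (cV2 u2 (π1 t) a - eV u2 (π1 t) (π2 t)) + μ * (c2 a - π2 t a)) t)
    (π1μ : A1 → ℝ) (π2μ : A2 → ℝ)
    (hπ1μ : π1μ ∈ stdSimplex ℝ A1) (hπ2μ : π2μ ∈ stdSimplex ℝ A2)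
    (hst1 : ∀ a, π1μ a * (cV1 u1 π2μ a - eV u1 π1μ π2μ) + μ * (c1 a - π1μ a) = 0)
    (hst2 : ∀ a, π2μ a * (cV2 u2 π1μ a - eV u2 π1μ π2μ) + μ * (c2 a - π2μ a) = 0)
    (ξ : ℝ)
    (hξ : ξ = min (Finset.univ.inf' Finset.univ_nonempty fun a => c1 a / π1μ a)
                  (Finset.univ.inf' Finset.univ_nonempty fun a => c2 a / π2μ a)) :
    ∀ t, 0 ≤ t → KLd π1μ (π1 t) + KLd π2μ (π2 t) ≤
      (KLd π1μ (π1 0) + KLd π2μ (π2 0)) * Real.exp (-μ * ξ * t) := by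
  have hr1 : ∀ a, 0 < π1μ a := fun a => (hπ1μ.1 a).lt_of_ne
    (ne_zero_of_rmdField_eq_zero hμ.ne' (hc1pos a).ne' (hst1 a)).symm
  have hr2 : ∀ a, 0 < π2μ a := fun a => (hπ2μ.1 a).lt_of_ne
    (ne_zero_of_rmdField_eq_zero hμ.ne' (hc2pos a).ne' (hst2 a)).symm
  have hξ1 : ∀ a, ξ ≤ c1 a / π1μ a := fun a =>
    hξ ▸ (min_le_left _ _).trans (inf'_le _ (mem_univ a))
  have hξ2 : ∀ a, ξ ≤ c2 a / π2μ a := fun a =>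
    hξ ▸ (min_le_right _ _).trans (inf'_le _ (mem_univ a))
  have hξ0 : 0 ≤ ξ := hξ ▸ le_min
    ((le_inf'_iff _ _).2 fun a _ => (div_pos (hc1pos a) (hr1 a)).le)
    ((le_inf'_iff _ _).2 fun a _ => (div_pos (hc2pos a) (hr2 a)).le)
  refine le_mul_exp_of_hasDerivAt_le (fun t ht => (hasDerivAt_KLd (hrmd1 t ht)
    fun a => (hpos1 t ht a).ne').add (hasDerivAt_KLd (hrmd2 t ht) fun a => (hpos2 t ht a).ne'))
    fun t ht => ?_
  have hdiss := rmd_dissipation_eq hzs hc1.2 hc2.2 (hmem1 t ht).2 (hmem2 t ht).2 hπ1μ.2 hπ2μ.2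
    (fun a => (hpos1 t ht a).ne') (fun a => (hpos2 t ht a).ne') (fun a => (hr1 a).ne')
    (fun a => (hr2 a).ne') hst1 hst2
  unfold rmdField at hdiss
  rw [← neg_add, hdiss]
  have hb1 := mul_KLd_le_sum_sq_div hξ0 hξ1 (fun a => (hr1 a).le) (hpos1 t ht)
    (hπ1μ.2.trans (hmem1 t ht).2.symm)
  have hb2 := mul_KLd_le_sum_sq_div hξ0 hξ2 (fun a => (hr2 a).le) (hpos2 t ht)
    (hπ2μ.2.trans (hmem2 t ht).2.symm)
  have hbound := mul_le_mul_of_nonneg_left (add_le_add hb1 hb2) hμ.le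
  linarith
end
end

section
/- Fix a mutation parameter μ > 0 and reference strategies c_i ∈ Δ°(A_i). If π^μ and π' are both stationary points of the replicator–mutator dynamics in Δ(A₁) × Δ(A₂) (for the same μ and c), then π^μ = π'; that is, the stationary point of RMD is unique. -/
/-! At a stationary point the mutation term forces full support, and dividing the stationarity
equation by `π_i(a)` gives `q_i(a) - v_i = μ (1 - c_i(a) / π_i(a))`. Hence for two stationary
points `π, π'` the sum `∑ₐ (π'_i(a) - π_i(a)) (q_i^π(a) - q_i^{π'}(a))` equals
`-μ ∑ₐ c_i(a) (π'_i(a) - π_i(a))² / (π_i(a) π'_i(a)) ≤ 0`, with equality only if `π_i = π'_i`.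
In a zero-sum game these sums of the two players add up to zero, so both vanish. -/

open Finset

noncomputable section

variable {A1 A2 : Type*}

lemma cV1_sub [Fintype A2] (u : A1 → A2 → ℝ) (p2 p2' : A2 → ℝ) (a : A1) :
    cV1 u (p2 - p2') a = cV1 u p2 a - cV1 u p2' a := by
  simp only [cV1, Pi.sub_apply, sub_mul, sum_sub_distrib]

lemma cV2_sub [Fintype A1] (u : A1 → A2 → ℝ) (p1 p1' : A1 → ℝ) (a : A2) :
    cV2 u (p1 - p1') a = cV2 u p1 a - cV2 u p1' a := by
  simp only [cV2, Pi.sub_apply, sub_mul, sum_sub_distrib]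

section ZeroSum

variable [Fintype A1] [Fintype A2]

lemma eV_sub_add_eV_sub_of_zero_sum {u1 u2 : A1 → A2 → ℝ}
    (hzs : ∀ a1 a2, u2 a1 a2 = -u1 a1 a2) (p1 p1' : A1 → ℝ) (p2 p2' : A2 → ℝ) :
    eV u1 (p1' - p1) (p2 - p2') + eV u2 (p1 - p1') (p2' - p2) = 0 := by
  simp only [eV, hzs, Pi.sub_apply, ← sum_add_distrib]
  exact sum_eq_zero fun _ _ => sum_eq_zero fun _ _ => by ring

/-- In a zero-sum game the payoff changes seen by the two players cancel. -/
lemma sum_sub_mul_cV1_sub_add_sum_sub_mul_cV2_sub {u1 u2 : A1 → A2 → ℝ}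
    (hzs : ∀ a1 a2, u2 a1 a2 = -u1 a1 a2) (p1 p1' : A1 → ℝ) (p2 p2' : A2 → ℝ) :
    ∑ a, (p1' a - p1 a) * (cV1 u1 p2 a - cV1 u1 p2' a)
      + ∑ a, (p2' a - p2 a) * (cV2 u2 p1 a - cV2 u2 p1' a) = 0 := by
  simp only [← cV1_sub, ← cV2_sub]
  rw [← eV_sub_add_eV_sub_of_zero_sum hzs p1 p1' p2 p2', ← sum_mul_cV1, ← sum_mul_cV2]
  rfl

end ZeroSum

lemma pos_of_stationary {μ c p q v : ℝ} (hμ : 0 < μ) (hc : 0 < c) (hp : 0 ≤ p)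
    (h : p * (q - v) + μ * (c - p) = 0) : 0 < p := by
  refine hp.lt_of_ne ?_
  rintro rfl
  have : 0 < μ * c := mul_pos hμ hc
  linarith

lemma sub_mul_sub_of_stationary {μ c p p' q q' v v' : ℝ} (hp : p ≠ 0) (hp' : p' ≠ 0)
    (h : p * (q - v) + μ * (c - p) = 0) (h' : p' * (q' - v') + μ * (c - p') = 0) :
    (p' - p) * (q - q') = (p' - p) * (v - v') - μ * (c * (p' - p) ^ 2 / (p * p')) := by
  field_simp
  linear_combination (p' - p) * p' * h - (p' - p) * p * h'

section Stationary

variable {A : Type*} [Fintype A] {μ v v' : ℝ} {c p p' q q' : A → ℝ}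

lemma sum_sub_mul_sub_of_stationary (hp : ∀ a, p a ≠ 0) (hp' : ∀ a, p' a ≠ 0)
    (hsum : ∑ a, p a = ∑ a, p' a)
    (h : ∀ a, p a * (q a - v) + μ * (c a - p a) = 0)
    (h' : ∀ a, p' a * (q' a - v') + μ * (c a - p' a) = 0) :
    ∑ a, (p' a - p a) * (q a - q' a) = -(μ * ∑ a, c a * (p' a - p a) ^ 2 / (p a * p' a)) := by
  have hsub : ∑ a, (p' a - p a) = 0 := by rw [sum_sub_distrib, hsum, sub_self]
  simp only [fun a => sub_mul_sub_of_stationary (hp a) (hp' a) (h a) (h' a), sum_sub_distrib,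
    ← sum_mul, hsub, ← mul_sum]
  ring

lemma sum_sub_mul_sub_nonpos_of_stationary (hμ : 0 < μ) (hc : ∀ a, 0 < c a)
    (hp : p ∈ stdSimplex ℝ A) (hp' : p' ∈ stdSimplex ℝ A)
    (h : ∀ a, p a * (q a - v) + μ * (c a - p a) = 0)
    (h' : ∀ a, p' a * (q' a - v') + μ * (c a - p' a) = 0) :
    ∑ a, (p' a - p a) * (q a - q' a) ≤ 0 := by
  have hpos a := pos_of_stationary hμ (hc a) (hp.1 a) (h a)
  have hpos' a := pos_of_stationary hμ (hc a) (hp'.1 a) (h' a)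
  rw [sum_sub_mul_sub_of_stationary (fun a => (hpos a).ne') (fun a => (hpos' a).ne')
    (hp.2.trans hp'.2.symm) h h', neg_nonpos]
  have hterm a : 0 ≤ c a * (p' a - p a) ^ 2 / (p a * p' a) := by
    have := hc a; have := hpos a; have := hpos' a
    positivity
  exact mul_nonneg hμ.le (sum_nonneg fun a _ => hterm a)

lemma eq_of_stationary_of_sum_sub_mul_sub_nonneg (hμ : 0 < μ) (hc : ∀ a, 0 < c a)
    (hp : p ∈ stdSimplex ℝ A) (hp' : p' ∈ stdSimplex ℝ A)
    (h : ∀ a, p a * (q a - v) + μ * (c a - p a) = 0)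
    (h' : ∀ a, p' a * (q' a - v') + μ * (c a - p' a) = 0)
    (hnn : 0 ≤ ∑ a, (p' a - p a) * (q a - q' a)) : p = p' := by
  have hpos a := pos_of_stationary hμ (hc a) (hp.1 a) (h a)
  have hpos' a := pos_of_stationary hμ (hc a) (hp'.1 a) (h' a)
  rw [sum_sub_mul_sub_of_stationary (fun a => (hpos a).ne') (fun a => (hpos' a).ne')
    (hp.2.trans hp'.2.symm) h h', neg_nonneg] at hnn
  have hterm a : 0 ≤ c a * (p' a - p a) ^ 2 / (p a * p' a) := by
    have := hc a; have := hpos a; have := hpos' a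
    positivity
  have hzero : ∑ a, c a * (p' a - p a) ^ 2 / (p a * p' a) = 0 :=
    le_antisymm (nonpos_of_mul_nonpos_right hnn hμ) (sum_nonneg fun a _ => hterm a)
  funext a
  have ha := (sum_eq_zero_iff_of_nonneg fun a _ => hterm a).mp hzero a (mem_univ a)
  simpa [(hc a).ne', (hpos a).ne', (hpos' a).ne', sub_eq_zero, eq_comm] using ha

end Stationary

theorem rmd_stationary_unique_general
    [Fintype A1] [Fintype A2]
    (u1 u2 : A1 → A2 → ℝ) (hzs : ∀ a1 a2, u2 a1 a2 = -u1 a1 a2)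
    (μ : ℝ) (hμ : 0 < μ)
    (c1 : A1 → ℝ) (c2 : A2 → ℝ)
    (hc1pos : ∀ a, 0 < c1 a)
    (hc2pos : ∀ a, 0 < c2 a)
    (π1μ : A1 → ℝ) (π2μ : A2 → ℝ)
    (hπ1μ : π1μ ∈ stdSimplex ℝ A1) (hπ2μ : π2μ ∈ stdSimplex ℝ A2)
    (hst1 : ∀ a, π1μ a * (cV1 u1 π2μ a - eV u1 π1μ π2μ) + μ * (c1 a - π1μ a) = 0)
    (hst2 : ∀ a, π2μ a * (cV2 u2 π1μ a - eV u2 π1μ π2μ) + μ * (c2 a - π2μ a) = 0)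
    (π1' : A1 → ℝ) (π2' : A2 → ℝ)
    (hπ1' : π1' ∈ stdSimplex ℝ A1) (hπ2' : π2' ∈ stdSimplex ℝ A2)
    (hst1' : ∀ a, π1' a * (cV1 u1 π2' a - eV u1 π1' π2') + μ * (c1 a - π1' a) = 0)
    (hst2' : ∀ a, π2' a * (cV2 u2 π1' a - eV u2 π1' π2') + μ * (c2 a - π2' a) = 0) :
    π1μ = π1' ∧ π2μ = π2' := by
  have hzero := sum_sub_mul_cV1_sub_add_sum_sub_mul_cV2_sub hzs π1μ π1' π2μ π2'
  have h1 := sum_sub_mul_sub_nonpos_of_stationary hμ hc1pos hπ1μ hπ1' hst1 hst1'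
  have h2 := sum_sub_mul_sub_nonpos_of_stationary hμ hc2pos hπ2μ hπ2' hst2 hst2'
  exact ⟨eq_of_stationary_of_sum_sub_mul_sub_nonneg hμ hc1pos hπ1μ hπ1' hst1 hst1' (by linarith),
    eq_of_stationary_of_sum_sub_mul_sub_nonneg hμ hc2pos hπ2μ hπ2' hst2 hst2' (by linarith)⟩

/-- **uniqueness of the RMD stationary point.** For a fixed mutation parameter
`μ > 0` and reference strategies `c_i ∈ Δ°(A_i)`, if `π^μ` and `π'` are both stationary points
of the replicator–mutator dynamics in `Δ(A₁) × Δ(A₂)`, then `π^μ = π'`. -/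
theorem rmd_stationary_unique
    [Fintype A1] [Fintype A2]
    (u1 u2 : A1 → A2 → ℝ) (hzs : ∀ a1 a2, u2 a1 a2 = -u1 a1 a2)
    (μ : ℝ) (hμ : 0 < μ)
    (c1 : A1 → ℝ) (c2 : A2 → ℝ)
    (hc1 : c1 ∈ stdSimplex ℝ A1) (hc1pos : ∀ a, 0 < c1 a)
    (hc2 : c2 ∈ stdSimplex ℝ A2) (hc2pos : ∀ a, 0 < c2 a)
    (π1μ : A1 → ℝ) (π2μ : A2 → ℝ)
    (hπ1μ : π1μ ∈ stdSimplex ℝ A1) (hπ2μ : π2μ ∈ stdSimplex ℝ A2)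
    (hst1 : ∀ a, π1μ a * (cV1 u1 π2μ a - eV u1 π1μ π2μ) + μ * (c1 a - π1μ a) = 0)
    (hst2 : ∀ a, π2μ a * (cV2 u2 π1μ a - eV u2 π1μ π2μ) + μ * (c2 a - π2μ a) = 0)
    (π1' : A1 → ℝ) (π2' : A2 → ℝ)
    (hπ1' : π1' ∈ stdSimplex ℝ A1) (hπ2' : π2' ∈ stdSimplex ℝ A2)
    (hst1' : ∀ a, π1' a * (cV1 u1 π2' a - eV u1 π1' π2') + μ * (c1 a - π1' a) = 0)
    (hst2' : ∀ a, π2' a * (cV2 u2 π1' a - eV u2 π1' π2') + μ * (c2 a - π2' a) = 0) :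
    π1μ = π1' ∧ π2μ = π2' :=
  rmd_stationary_unique_general u1 u2 hzs μ hμ c1 c2 hc1pos hc2pos π1μ π2μ hπ1μ hπ2μ hst1 hst2 π1'
    π2' hπ1' hπ2' hst1' hst2'
end
end

section
/- Let π^μ be a stationary point of the replicator–mutator dynamics with mutation parameter μ > 0 and reference strategies c_i ∈ Δ°(A_i). Then for every player i ∈ {1,2} and every action a_i ∈ A_i, q_i^{π^μ}(a_i) − v_i^{π^μ} ≤ μ. -/
open Finset

noncomputable section

variable {A1 A2 : Type*}

/-- At a stationary point the mutation term `μ (c - p)` with `c > 0` forces `p > 0`, and then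
`p x = μ (p - c) < μ p`. -/
theorem lt_of_mul_add_mul_sub_eq_zero {p c x μ : ℝ} (hp : 0 ≤ p) (hc : 0 < c) (hμ : 0 < μ)
    (h : p * x + μ * (c - p) = 0) : x < μ := by
  have hp_pos : 0 < p := by
    refine hp.lt_of_ne fun hp0 => ?_
    subst hp0
    nlinarith [mul_pos hμ hc]
  have hpx : p * x < p * μ := by nlinarith [mul_pos hμ hc]
  exact lt_of_mul_lt_mul_left hpx hp

theorem rmd_stationary_advantage_bound_general
    [Fintype A1] [Fintype A2]
    (u1 u2 : A1 → A2 → ℝ)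
    (μ : ℝ) (hμ : 0 < μ)
    (c1 : A1 → ℝ) (c2 : A2 → ℝ)
    (hc1pos : ∀ a, 0 < c1 a)
    (hc2pos : ∀ a, 0 < c2 a)
    (π1μ : A1 → ℝ) (π2μ : A2 → ℝ)
    (hπ1μ : π1μ ∈ stdSimplex ℝ A1) (hπ2μ : π2μ ∈ stdSimplex ℝ A2)
    (hst1 : ∀ a, π1μ a * (cV1 u1 π2μ a - eV u1 π1μ π2μ) + μ * (c1 a - π1μ a) = 0)
    (hst2 : ∀ a, π2μ a * (cV2 u2 π1μ a - eV u2 π1μ π2μ) + μ * (c2 a - π2μ a) = 0) :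
    (∀ a, cV1 u1 π2μ a - eV u1 π1μ π2μ ≤ μ) ∧
    (∀ a, cV2 u2 π1μ a - eV u2 π1μ π2μ ≤ μ) :=
  ⟨fun a => (lt_of_mul_add_mul_sub_eq_zero (hπ1μ.1 a) (hc1pos a) hμ (hst1 a)).le,
   fun a => (lt_of_mul_add_mul_sub_eq_zero (hπ2μ.1 a) (hc2pos a) hμ (hst2 a)).le⟩

/-- **Lemma 3.5 of Bauer et al..** Let `π^μ` be a stationary point of the
replicator–mutator dynamics with mutation parameter `μ > 0` and interior reference strategies.
Then for every player `i` and action `a_i`, `q_i^{π^μ}(a_i) − v_i^{π^μ} ≤ μ`. -/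
theorem rmd_stationary_advantage_bound
    [Fintype A1] [Fintype A2]
    (u1 u2 : A1 → A2 → ℝ) (hzs : ∀ a1 a2, u2 a1 a2 = -u1 a1 a2)
    (μ : ℝ) (hμ : 0 < μ)
    (c1 : A1 → ℝ) (c2 : A2 → ℝ)
    (hc1 : c1 ∈ stdSimplex ℝ A1) (hc1pos : ∀ a, 0 < c1 a)
    (hc2 : c2 ∈ stdSimplex ℝ A2) (hc2pos : ∀ a, 0 < c2 a)
    (π1μ : A1 → ℝ) (π2μ : A2 → ℝ)
    (hπ1μ : π1μ ∈ stdSimplex ℝ A1) (hπ2μ : π2μ ∈ stdSimplex ℝ A2)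
    (hst1 : ∀ a, π1μ a * (cV1 u1 π2μ a - eV u1 π1μ π2μ) + μ * (c1 a - π1μ a) = 0)
    (hst2 : ∀ a, π2μ a * (cV2 u2 π1μ a - eV u2 π1μ π2μ) + μ * (c2 a - π2μ a) = 0) :
    (∀ a, cV1 u1 π2μ a - eV u1 π1μ π2μ ≤ μ) ∧
    (∀ a, cV2 u2 π1μ a - eV u2 π1μ π2μ ≤ μ) :=
  rmd_stationary_advantage_bound_general u1 u2 μ hμ c1 c2 hc1pos hc2pos π1μ π2μ hπ1μ hπ2μ hst1 hst2
end
end
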